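/- The set of global minimizers of O over Z = Ω₂ ∩ Ω₃ is nonempty and bounded, and every global minimizer of O over Z is also a global minimizer of O over Ω₂. -/

import Mathlib

/-!
On `Ω₂` the terms `F`, `R`, `P` are nonnegative, so a point `z ∈ Ω₂` with `O(z) ≤ θ` has
`F(z) ≤ θ`, `λ₁ ∑ eᵀvₙ ≤ θ` and `λ₂ ‖W‖_F² ≤ θ`. These bound `W`, `V`, `Wxₙ` and `Wᵀvₙ`, and with
them `b₁ ≤ α` (from `Wxₙ + b₁ ≤ vₙ`) and `b₂ ≤ α` (from `F(z) ≤ θ`). Raising the entries of `b₁`, `b₂`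
that lie below `-α` to `-α` then changes no ReLU value, hence not `O`, and moves `z` into `Z`.
As `O(0) = ‖X‖_F²/N < θ`, minimizing `O` over `Z` or over `Ω₂` reduces to minimizing it over the
compact set `Z ∩ {O ≤ θ}`.
-/

open scoped BigOperators

noncomputable section

/-- A point `z = (W, b₁, b₂, V)`. -/
abbrev Pt (N N₀ N₁ : ℕ) : Type :=
  Matrix (Fin N₁) (Fin N₀) ℝ × (Fin N₁ → ℝ) × (Fin N₀ → ℝ) × Matrix (Fin N₁) (Fin N) ℝ

/-- ReLU: positive part. -/
def relu (y : ℝ) : ℝ := max y 0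

variable {N N₀ N₁ : ℕ}

/-- squared Euclidean norm of a point `z = (W,b₁,b₂,V)`. -/
def sqnormPt (z : Pt N N₀ N₁) : ℝ :=
  (∑ i, ∑ j, (z.1 i j) ^ 2) + (∑ i, (z.2.1 i) ^ 2) + (∑ j, (z.2.2.1 j) ^ 2)
    + (∑ i, ∑ n, (z.2.2.2 i n) ^ 2)

/-- Euclidean norm of a point. -/
def normPt (z : Pt N N₀ N₁) : ℝ := Real.sqrt (sqnormPt z)

/-- Euclidean distance between points. -/
def distPt (z z' : Pt N N₀ N₁) : ℝ := normPt (z - z')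

/-- `(W xₙ + b₁)ᵢ`. -/
def preact (X : Matrix (Fin N₀) (Fin N) ℝ) (z : Pt N N₀ N₁) (i : Fin N₁) (n : Fin N) : ℝ :=
  (∑ j, z.1 i j * X j n) + z.2.1 i

/-- `(Wᵀ vₙ + b₂)ⱼ`. -/
def outPre (z : Pt N N₀ N₁) (j : Fin N₀) (n : Fin N) : ℝ :=
  (∑ i, z.1 i j * z.2.2.2 i n) + z.2.2.1 j

/-- fidelity term `F(z)`. -/
def Fv (X : Matrix (Fin N₀) (Fin N) ℝ) (z : Pt N N₀ N₁) : ℝ :=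
  (1 / (N : ℝ)) * ∑ n, ∑ j, (relu (outPre z j n) - X j n) ^ 2

/-- regularization term `R(z)`. -/
def Rv (lam₁ lam₂ : ℝ) (z : Pt N N₀ N₁) : ℝ :=
  lam₁ * (∑ n, ∑ i, z.2.2.2 i n) + lam₂ * ∑ i, ∑ j, (z.1 i j) ^ 2

/-- penalty term `P(z)`. -/
def Pv (β : ℝ) (X : Matrix (Fin N₀) (Fin N) ℝ) (z : Pt N N₀ N₁) : ℝ :=
  β * ∑ n, ∑ i, (z.2.2.2 i n - relu (preact X z i n))

/-- objective `O(z) = F(z) + R(z) + P(z)`. -/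
def Ov (lam₁ lam₂ β : ℝ) (X : Matrix (Fin N₀) (Fin N) ℝ) (z : Pt N N₀ N₁) : ℝ :=
  Fv X z + Rv lam₁ lam₂ z + Pv β X z

/-- `Ω₁ = {z : vₙ = (Wxₙ + b₁)₊}`. -/
def Omega1 (X : Matrix (Fin N₀) (Fin N) ℝ) : Set (Pt N N₀ N₁) :=
  {z | ∀ i n, z.2.2.2 i n = relu (preact X z i n)}

/-- `Ω₂ = {z : vₙ ≥ (Wxₙ + b₁)₊}`. -/
def Omega2 (X : Matrix (Fin N₀) (Fin N) ℝ) : Set (Pt N N₀ N₁) :=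
  {z | ∀ i n, relu (preact X z i n) ≤ z.2.2.2 i n}

/-- level set `Ω_θ = {z ∈ Ω₂ : O(z) ≤ θ}` (also used for `Ω_δ`). -/
def OmegaLev (lam₁ lam₂ β θ : ℝ) (X : Matrix (Fin N₀) (Fin N) ℝ) : Set (Pt N N₀ N₁) :=
  {z | z ∈ Omega2 X ∧ Ov lam₁ lam₂ β X z ≤ θ}

/-- `‖X‖₁`: maximum absolute column sum. -/
def Xcol1 (X : Matrix (Fin N₀) (Fin N) ℝ) : ℝ := ⨆ n, ∑ j, |X j n|

/-- the constant `α`. -/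
def alphaC (N N₀ N₁ : ℕ) (lam₁ lam₂ θ : ℝ) (X : Matrix (Fin N₀) (Fin N) ℝ) : ℝ :=
  max (θ / lam₁ + Real.sqrt ((N₁ : ℝ) * (N₀ : ℝ) * θ / lam₂) * Xcol1 X)
      (θ * Real.sqrt ((N₁ : ℝ) * (N₀ : ℝ) * θ) / (lam₁ * Real.sqrt lam₂)
        + Real.sqrt ((N : ℝ) * θ) + Xcol1 X)

/-- `Ω₃ = {z : ‖b₁‖_∞ ≤ α, ‖b₂‖_∞ ≤ α}`. -/
def Omega3 (lam₁ lam₂ θ : ℝ) (X : Matrix (Fin N₀) (Fin N) ℝ) : Set (Pt N N₀ N₁) :=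
  {z | (∀ i, |z.2.1 i| ≤ alphaC N N₀ N₁ lam₁ lam₂ θ X) ∧
       (∀ j, |z.2.2.1 j| ≤ alphaC N N₀ N₁ lam₁ lam₂ θ X)}

/-- `Z = Ω₂ ∩ Ω₃`. -/
def Zset (lam₁ lam₂ θ : ℝ) (X : Matrix (Fin N₀) (Fin N) ℝ) : Set (Pt N N₀ N₁) :=
  Omega2 X ∩ Omega3 lam₁ lam₂ θ X

/-- tangent cone of `C` at `zb`. -/
def TangentCone (C : Set (Pt N N₀ N₁)) (zb : Pt N N₀ N₁) : Set (Pt N N₀ N₁) :=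
  {d | ∃ zs : ℕ → Pt N N₀ N₁, ∃ ts : ℕ → ℝ,
      (∀ k, zs k ∈ C) ∧ (∀ k, 0 < ts k) ∧
      Filter.Tendsto ts Filter.atTop (nhds 0) ∧
      Filter.Tendsto (fun k => distPt (zs k) zb) Filter.atTop (nhds 0) ∧
      Filter.Tendsto (fun k => normPt ((ts k)⁻¹ • (zs k - zb) - d)) Filter.atTop (nhds 0)}

/-- `zb` is a d-stationary point of `f` over `C`:
`liminf_{t↓0} (f(zb + t d) - f(zb))/t ≥ 0` for every tangent direction `d`. -/
def DStationary (f : Pt N N₀ N₁ → ℝ) (C : Set (Pt N N₀ N₁)) (zb : Pt N N₀ N₁) : Prop :=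
  zb ∈ C ∧ ∀ d ∈ TangentCone C zb, ∀ ε : ℝ, 0 < ε → ∃ δ : ℝ, 0 < δ ∧
    ∀ t : ℝ, 0 < t → t < δ → -ε < (f (zb + t • d) - f zb) / t

/-- smoothing function `s_μ` of the ReLU. -/
def smoothRelu (μ y : ℝ) : ℝ :=
  if y < 0 then 0 else if y ≤ μ then y ^ 2 / (2 * μ) else y - μ / 2

/-- smoothed fidelity term `F̃(z, μ)`. -/
def Ftil (X : Matrix (Fin N₀) (Fin N) ℝ) (z : Pt N N₀ N₁) (μ : ℝ) : ℝ :=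
  (1 / (N : ℝ)) * (∑ n, ∑ j, (relu (outPre z j n)) ^ 2)
    + (1 / (N : ℝ)) * (∑ j, ∑ n, (X j n) ^ 2)
    - (2 / (N : ℝ)) * ∑ n, ∑ j, X j n * smoothRelu μ (outPre z j n)

/-- smoothed penalty term `P̃(z, μ)`. -/
def Ptil (β : ℝ) (X : Matrix (Fin N₀) (Fin N) ℝ) (z : Pt N N₀ N₁) (μ : ℝ) : ℝ :=
  β * ∑ n, ∑ i, (z.2.2.2 i n - smoothRelu μ (preact X z i n))

/-- smoothed objective `Õ(z, μ)`. -/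
def Otil (lam₁ lam₂ β : ℝ) (X : Matrix (Fin N₀) (Fin N) ℝ) (z : Pt N N₀ N₁) (μ : ℝ) : ℝ :=
  Ftil X z μ + Ptil β X z μ + Rv lam₁ lam₂ z

variable {lam₁ lam₂ β θ : ℝ} {X : Matrix (Fin N₀) (Fin N) ℝ}

theorem single_le_sum_sum {ι κ M : Type*} [Fintype ι] [Fintype κ] [AddCommMonoid M]
    [PartialOrder M] [IsOrderedAddMonoid M] {f : ι → κ → M} (hf : ∀ i j, 0 ≤ f i j)
    (i : ι) (j : κ) : f i j ≤ ∑ i, ∑ j, f i j :=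
  (Finset.single_le_sum (fun j _ => hf i j) (Finset.mem_univ j)).trans
    (Finset.single_le_sum (f := fun i => ∑ j, f i j)
      (fun i _ => Finset.sum_nonneg fun j _ => hf i j) (Finset.mem_univ i))

theorem abs_sum_mul_le_of_abs_le {ι R : Type*} [Fintype ι] [Ring R] [LinearOrder R]
    [IsStrictOrderedRing R] {a b : ι → R} {A : R} (h : ∀ i, |a i| ≤ A) :
    |∑ i, a i * b i| ≤ A * ∑ i, |b i| := by
  rw [Finset.mul_sum]
  refine (Finset.abs_sum_le_sum_abs _ _).trans (Finset.sum_le_sum fun i _ => ?_)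
  rw [abs_mul]
  exact mul_le_mul_of_nonneg_right (h i) (abs_nonneg _)

theorem isMinOn_of_isMinOn_inter_sublevel {α β : Type*} [LinearOrder β] {f : α → β}
    {s : Set α} {c : β} {a z : α} (ha : a ∈ s ∩ {x | f x ≤ c})
    (hz : IsMinOn f (s ∩ {x | f x ≤ c}) z) : IsMinOn f s z := by
  intro w hw
  by_cases hwc : f w ≤ c
  · exact hz ⟨hw, hwc⟩
  · exact ((hz ha).trans ha.2).trans (not_le.1 hwc).le

theorem le_relu (y : ℝ) : y ≤ relu y := le_max_left y 0

theorem relu_nonneg (y : ℝ) : 0 ≤ relu y := le_max_right y 0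

theorem relu_of_nonpos {y : ℝ} (h : y ≤ 0) : relu y = 0 := max_eq_right h

theorem continuous_relu : Continuous relu := continuous_id.max continuous_const

theorem relu_add_max_neg {a b c : ℝ} (h : c ≤ a) : relu (c + max b (-a)) = relu (c + b) := by
  rcases le_total b (-a) with hb | hb
  · rw [max_eq_right hb, relu_of_nonpos (by linarith), relu_of_nonpos (by linarith)]
  · rw [max_eq_left hb]

theorem sum_abs_le_Xcol1 (X : Matrix (Fin N₀) (Fin N) ℝ) (n : Fin N) :
    ∑ j, |X j n| ≤ Xcol1 X :=
  le_ciSup (f := fun n => ∑ j, |X j n|) (Set.finite_range _).bddAbove n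

theorem Xcol1_nonneg (X : Matrix (Fin N₀) (Fin N) ℝ) : 0 ≤ Xcol1 X :=
  Real.iSup_nonneg fun _ => Finset.sum_nonneg fun _ _ => abs_nonneg _

theorem self_le_card_mul_card_mul (hN₀ : 0 < N₀) (hN₁ : 0 < N₁) (hθ : 0 ≤ θ) :
    θ ≤ (N₁ : ℝ) * N₀ * θ :=
  le_mul_of_one_le_left hθ (one_le_mul_of_one_le_of_one_le (by exact_mod_cast hN₁)
    (by exact_mod_cast hN₀))

theorem le_alphaC_left (hN₀ : 0 < N₀) (hN₁ : 0 < N₁) (hl₂ : 0 ≤ lam₂) (hθ : 0 ≤ θ) :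
    θ / lam₁ + √(θ / lam₂) * Xcol1 X ≤ alphaC N N₀ N₁ lam₁ lam₂ θ X := by
  refine le_trans ?_ (le_max_left _ _)
  have := Xcol1_nonneg X
  gcongr
  exact self_le_card_mul_card_mul hN₀ hN₁ hθ

theorem le_alphaC_right (hN₀ : 0 < N₀) (hN₁ : 0 < N₁) (hl₁ : 0 ≤ lam₁) (hθ : 0 ≤ θ) :
    √(N * θ) + Xcol1 X + √(θ / lam₂) * (θ / lam₁) ≤ alphaC N N₀ N₁ lam₁ lam₂ θ X := by
  refine le_trans ?_ (le_max_right _ _)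
  have key : √(θ / lam₂) * (θ / lam₁) ≤ θ * √(N₁ * N₀ * θ) / (lam₁ * √lam₂) := by
    rw [Real.sqrt_div hθ, div_mul_div_comm, mul_comm √θ, mul_comm √lam₂]
    gcongr
    exact self_le_card_mul_card_mul hN₀ hN₁ hθ
  linarith

theorem alphaC_nonneg (hN₀ : 0 < N₀) (hN₁ : 0 < N₁) (hl₁ : 0 ≤ lam₁) (hl₂ : 0 ≤ lam₂)
    (hθ : 0 ≤ θ) : 0 ≤ alphaC N N₀ N₁ lam₁ lam₂ θ X :=
  le_trans (by have := Xcol1_nonneg X; positivity) (le_alphaC_left hN₀ hN₁ hl₂ hθ)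

theorem v_nonneg_of_mem_Omega2 {z : Pt N N₀ N₁} (hz : z ∈ Omega2 X) (i : Fin N₁) (n : Fin N) :
    0 ≤ z.2.2.2 i n :=
  (relu_nonneg _).trans (hz i n)

theorem Fv_nonneg (z : Pt N N₀ N₁) : 0 ≤ Fv X z := by
  unfold Fv; positivity

theorem Pv_nonneg_of_mem_Omega2 (hβ : 0 ≤ β) {z : Pt N N₀ N₁} (hz : z ∈ Omega2 X) :
    0 ≤ Pv β X z :=
  mul_nonneg hβ (Finset.sum_nonneg fun n _ => Finset.sum_nonneg fun i _ => sub_nonneg.2 (hz i n))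

theorem terms_le_of_mem_OmegaLev (hl₁ : 0 ≤ lam₁) (hl₂ : 0 ≤ lam₂) (hβ : 0 ≤ β)
    {z : Pt N N₀ N₁} (hz : z ∈ OmegaLev lam₁ lam₂ β θ X) :
    Fv X z ≤ θ ∧ lam₁ * ∑ n, ∑ i, z.2.2.2 i n ≤ θ ∧ lam₂ * ∑ i, ∑ j, z.1 i j ^ 2 ≤ θ := by
  obtain ⟨hz₂, hO⟩ := hz
  have hF := Fv_nonneg (X := X) z
  have hP := Pv_nonneg_of_mem_Omega2 hβ hz₂
  have hv : 0 ≤ lam₁ * ∑ n, ∑ i, z.2.2.2 i n := mul_nonneg hl₁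
    (Finset.sum_nonneg fun n _ => Finset.sum_nonneg fun i _ => v_nonneg_of_mem_Omega2 hz₂ i n)
  have hW : 0 ≤ lam₂ * ∑ i, ∑ j, z.1 i j ^ 2 := by positivity
  unfold Ov Rv at hO
  exact ⟨by linarith, by linarith, by linarith⟩

theorem nonneg_of_mem_OmegaLev (hl₁ : 0 ≤ lam₁) (hl₂ : 0 ≤ lam₂) (hβ : 0 ≤ β)
    {z : Pt N N₀ N₁} (hz : z ∈ OmegaLev lam₁ lam₂ β θ X) : 0 ≤ θ :=
  (Fv_nonneg z).trans (terms_le_of_mem_OmegaLev hl₁ hl₂ hβ hz).1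

theorem sum_v_le_of_mem_OmegaLev (hl₁ : 0 < lam₁) (hl₂ : 0 ≤ lam₂) (hβ : 0 ≤ β)
    {z : Pt N N₀ N₁} (hz : z ∈ OmegaLev lam₁ lam₂ β θ X) (n : Fin N) :
    ∑ i, z.2.2.2 i n ≤ θ / lam₁ := by
  rw [le_div_iff₀' hl₁]
  refine le_trans (mul_le_mul_of_nonneg_left ?_ hl₁.le)
    (terms_le_of_mem_OmegaLev hl₁.le hl₂ hβ hz).2.1
  exact Finset.single_le_sum (f := fun n => ∑ i, z.2.2.2 i n)
    (fun n _ => Finset.sum_nonneg fun i _ => v_nonneg_of_mem_Omega2 hz.1 i n) (Finset.mem_univ n)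

theorem v_le_of_mem_OmegaLev (hl₁ : 0 < lam₁) (hl₂ : 0 ≤ lam₂) (hβ : 0 ≤ β)
    {z : Pt N N₀ N₁} (hz : z ∈ OmegaLev lam₁ lam₂ β θ X) (i : Fin N₁) (n : Fin N) :
    z.2.2.2 i n ≤ θ / lam₁ :=
  (Finset.single_le_sum (fun i _ => v_nonneg_of_mem_Omega2 hz.1 i n) (Finset.mem_univ i)).trans
    (sum_v_le_of_mem_OmegaLev hl₁ hl₂ hβ hz n)

theorem abs_W_le_of_mem_OmegaLev (hl₁ : 0 ≤ lam₁) (hl₂ : 0 < lam₂) (hβ : 0 ≤ β)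
    {z : Pt N N₀ N₁} (hz : z ∈ OmegaLev lam₁ lam₂ β θ X) (i : Fin N₁) (j : Fin N₀) :
    |z.1 i j| ≤ √(θ / lam₂) := by
  refine Real.abs_le_sqrt ?_
  rw [le_div_iff₀' hl₂]
  exact (mul_le_mul_of_nonneg_left (single_le_sum_sum (fun i j => sq_nonneg (z.1 i j)) i j)
    hl₂.le).trans (terms_le_of_mem_OmegaLev hl₁ hl₂.le hβ hz).2.2

theorem relu_outPre_le_of_mem_OmegaLev (hl₁ : 0 ≤ lam₁) (hl₂ : 0 ≤ lam₂) (hβ : 0 ≤ β)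
    {z : Pt N N₀ N₁} (hz : z ∈ OmegaLev lam₁ lam₂ β θ X) (j : Fin N₀) (n : Fin N) :
    relu (outPre z j n) ≤ √(N * θ) + Xcol1 X := by
  have hN : (0 : ℝ) < N := by exact_mod_cast n.pos
  have hsq : (relu (outPre z j n) - X j n) ^ 2 ≤ N * θ := by
    have hF := (terms_le_of_mem_OmegaLev hl₁ hl₂ hβ hz).1
    rw [Fv, one_div, inv_mul_le_iff₀ hN] at hF
    exact (single_le_sum_sum (fun n j => sq_nonneg (relu (outPre z j n) - X j n)) n j).trans hF
  have hX : X j n ≤ Xcol1 X := (le_abs_self _).trans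
    ((Finset.single_le_sum (fun j _ => abs_nonneg (X j n)) (Finset.mem_univ j)).trans
      (sum_abs_le_Xcol1 X n))
  linarith [(abs_le.1 (Real.abs_le_sqrt hsq)).2]

theorem abs_sum_W_mul_X_le_of_mem_OmegaLev (hl₁ : 0 ≤ lam₁) (hl₂ : 0 < lam₂) (hβ : 0 ≤ β)
    {z : Pt N N₀ N₁} (hz : z ∈ OmegaLev lam₁ lam₂ β θ X) (i : Fin N₁) (n : Fin N) :
    |∑ j, z.1 i j * X j n| ≤ √(θ / lam₂) * Xcol1 X :=
  (abs_sum_mul_le_of_abs_le (abs_W_le_of_mem_OmegaLev hl₁ hl₂ hβ hz i)).trans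
    (mul_le_mul_of_nonneg_left (sum_abs_le_Xcol1 X n) (Real.sqrt_nonneg _))

theorem abs_sum_W_mul_v_le_of_mem_OmegaLev (hl₁ : 0 < lam₁) (hl₂ : 0 < lam₂) (hβ : 0 ≤ β)
    {z : Pt N N₀ N₁} (hz : z ∈ OmegaLev lam₁ lam₂ β θ X) (j : Fin N₀) (n : Fin N) :
    |∑ i, z.1 i j * z.2.2.2 i n| ≤ √(θ / lam₂) * (θ / lam₁) := by
  refine (abs_sum_mul_le_of_abs_le fun i => abs_W_le_of_mem_OmegaLev hl₁.le hl₂ hβ hz i j).trans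
    (mul_le_mul_of_nonneg_left ?_ (Real.sqrt_nonneg _))
  simp_rw [abs_of_nonneg (v_nonneg_of_mem_Omega2 hz.1 _ n)]
  exact sum_v_le_of_mem_OmegaLev hl₁ hl₂.le hβ hz n

theorem b₁_le_alphaC_of_mem_OmegaLev (hN : 0 < N) (hN₀ : 0 < N₀) (hN₁ : 0 < N₁)
    (hl₁ : 0 < lam₁) (hl₂ : 0 < lam₂) (hβ : 0 ≤ β) {z : Pt N N₀ N₁}
    (hz : z ∈ OmegaLev lam₁ lam₂ β θ X) (i : Fin N₁) :
    z.2.1 i ≤ alphaC N N₀ N₁ lam₁ lam₂ θ X := by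
  let n : Fin N := ⟨0, hN⟩
  have hpre : preact X z i n ≤ θ / lam₁ :=
    (le_relu _).trans ((hz.1 i n).trans (v_le_of_mem_OmegaLev hl₁ hl₂.le hβ hz i n))
  have hWX := abs_le.1 (abs_sum_W_mul_X_le_of_mem_OmegaLev hl₁.le hl₂ hβ hz i n)
  have hα := le_alphaC_left (lam₁ := lam₁) (X := X) hN₀ hN₁ hl₂.le
    (nonneg_of_mem_OmegaLev hl₁.le hl₂.le hβ hz)
  unfold preact at hpre
  linarith

theorem b₂_le_alphaC_of_mem_OmegaLev (hN : 0 < N) (hN₀ : 0 < N₀) (hN₁ : 0 < N₁)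
    (hl₁ : 0 < lam₁) (hl₂ : 0 < lam₂) (hβ : 0 ≤ β) {z : Pt N N₀ N₁}
    (hz : z ∈ OmegaLev lam₁ lam₂ β θ X) (j : Fin N₀) :
    z.2.2.1 j ≤ alphaC N N₀ N₁ lam₁ lam₂ θ X := by
  let n : Fin N := ⟨0, hN⟩
  have hout : outPre z j n ≤ √(N * θ) + Xcol1 X :=
    (le_relu _).trans (relu_outPre_le_of_mem_OmegaLev hl₁.le hl₂.le hβ hz j n)
  have hWv := abs_le.1 (abs_sum_W_mul_v_le_of_mem_OmegaLev hl₁ hl₂ hβ hz j n)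
  have hα := le_alphaC_right (lam₂ := lam₂) (X := X) hN₀ hN₁ hl₁.le
    (nonneg_of_mem_OmegaLev hl₁.le hl₂.le hβ hz)
  unfold outPre at hout
  linarith

def clampBias (a : ℝ) (z : Pt N N₀ N₁) : Pt N N₀ N₁ :=
  (z.1, fun i => max (z.2.1 i) (-a), fun j => max (z.2.2.1 j) (-a), z.2.2.2)

theorem relu_preact_clampBias {a : ℝ} {z : Pt N N₀ N₁} {i : Fin N₁} {n : Fin N}
    (h : ∑ j, z.1 i j * X j n ≤ a) :
    relu (preact X (clampBias a z) i n) = relu (preact X z i n) :=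
  relu_add_max_neg h

theorem relu_outPre_clampBias {a : ℝ} {z : Pt N N₀ N₁} {j : Fin N₀} {n : Fin N}
    (h : ∑ i, z.1 i j * z.2.2.2 i n ≤ a) :
    relu (outPre (clampBias a z) j n) = relu (outPre z j n) :=
  relu_add_max_neg h

theorem Ov_clampBias {a : ℝ} {z : Pt N N₀ N₁} (hX : ∀ i n, ∑ j, z.1 i j * X j n ≤ a)
    (hv : ∀ j n, ∑ i, z.1 i j * z.2.2.2 i n ≤ a) :
    Ov lam₁ lam₂ β X (clampBias a z) = Ov lam₁ lam₂ β X z := by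
  simp only [Ov, Fv, Pv, relu_outPre_clampBias (hv _ _), relu_preact_clampBias (hX _ _)]
  rfl

theorem clampBias_mem_Omega2 {a : ℝ} {z : Pt N N₀ N₁} (hX : ∀ i n, ∑ j, z.1 i j * X j n ≤ a)
    (hz : z ∈ Omega2 X) : clampBias a z ∈ Omega2 X :=
  fun i n => (relu_preact_clampBias (hX i n)).trans_le (hz i n)

theorem clampBias_mem_Omega3 {z : Pt N N₀ N₁} (hα : 0 ≤ alphaC N N₀ N₁ lam₁ lam₂ θ X)
    (hb₁ : ∀ i, z.2.1 i ≤ alphaC N N₀ N₁ lam₁ lam₂ θ X)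
    (hb₂ : ∀ j, z.2.2.1 j ≤ alphaC N N₀ N₁ lam₁ lam₂ θ X) :
    clampBias (alphaC N N₀ N₁ lam₁ lam₂ θ X) z ∈ Omega3 lam₁ lam₂ θ X :=
  ⟨fun i => abs_le.2 ⟨le_max_right _ _, max_le (hb₁ i) (by linarith)⟩,
    fun j => abs_le.2 ⟨le_max_right _ _, max_le (hb₂ j) (by linarith)⟩⟩

theorem exists_mem_Zset_Ov_eq_of_mem_OmegaLev (hN : 0 < N) (hN₀ : 0 < N₀) (hN₁ : 0 < N₁)
    (hl₁ : 0 < lam₁) (hl₂ : 0 < lam₂) (hβ : 0 ≤ β) {z : Pt N N₀ N₁}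
    (hz : z ∈ OmegaLev lam₁ lam₂ β θ X) :
    ∃ z' : Pt N N₀ N₁, z' ∈ Zset lam₁ lam₂ θ X ∧ Ov lam₁ lam₂ β X z' = Ov lam₁ lam₂ β X z := by
  have hθ := nonneg_of_mem_OmegaLev hl₁.le hl₂.le hβ hz
  have hα₁ := le_alphaC_left (lam₁ := lam₁) (X := X) hN₀ hN₁ hl₂.le hθ
  have hα₂ := le_alphaC_right (lam₂ := lam₂) (X := X) hN₀ hN₁ hl₁.le hθ
  have hθl₁ : 0 ≤ θ / lam₁ := div_nonneg hθ hl₁.le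
  have hX : ∀ i n, ∑ j, z.1 i j * X j n ≤ alphaC N N₀ N₁ lam₁ lam₂ θ X := fun i n => by
    linarith [(abs_le.1 (abs_sum_W_mul_X_le_of_mem_OmegaLev hl₁.le hl₂ hβ hz i n)).2]
  have hv : ∀ j n, ∑ i, z.1 i j * z.2.2.2 i n ≤ alphaC N N₀ N₁ lam₁ lam₂ θ X := fun j n => by
    linarith [(abs_le.1 (abs_sum_W_mul_v_le_of_mem_OmegaLev hl₁ hl₂ hβ hz j n)).2,
      Real.sqrt_nonneg (N * θ), Xcol1_nonneg X]
  exact ⟨_, ⟨clampBias_mem_Omega2 hX hz.1, clampBias_mem_Omega3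
    (alphaC_nonneg hN₀ hN₁ hl₁.le hl₂.le hθ) (b₁_le_alphaC_of_mem_OmegaLev hN hN₀ hN₁ hl₁ hl₂ hβ hz)
    (b₂_le_alphaC_of_mem_OmegaLev hN hN₀ hN₁ hl₁ hl₂ hβ hz)⟩, Ov_clampBias hX hv⟩

theorem continuous_Ov : Continuous (Ov lam₁ lam₂ β X : Pt N N₀ N₁ → ℝ) := by
  unfold Ov Fv Rv Pv relu outPre preact; fun_prop

theorem continuous_normPt : Continuous (normPt : Pt N N₀ N₁ → ℝ) := by
  unfold normPt sqnormPt; fun_prop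

theorem isClosed_Omega2 : IsClosed (Omega2 X : Set (Pt N N₀ N₁)) := by
  simp only [Omega2, Set.ofPred_forall]
  exact isClosed_iInter fun i => isClosed_iInter fun n =>
    isClosed_le (continuous_relu.comp (by unfold preact; fun_prop)) (by fun_prop)

theorem isClosed_Omega3 : IsClosed (Omega3 lam₁ lam₂ θ X : Set (Pt N N₀ N₁)) := by
  simp only [Omega3, Set.ofPred_and, Set.ofPred_forall]
  exact (isClosed_iInter fun i => isClosed_le (by fun_prop) continuous_const).inter
    (isClosed_iInter fun j => isClosed_le (by fun_prop) continuous_const)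

theorem isCompact_Zset_inter_sublevel (hl₁ : 0 < lam₁) (hl₂ : 0 < lam₂) (hβ : 0 ≤ β) :
    IsCompact (Zset lam₁ lam₂ θ X ∩ {z : Pt N N₀ N₁ | Ov lam₁ lam₂ β X z ≤ θ}) := by
  set α := alphaC N N₀ N₁ lam₁ lam₂ θ X
  let box : Set (Pt N N₀ N₁) :=
    (Set.univ.pi fun _ => Set.univ.pi fun _ => Set.Icc (-√(θ / lam₂)) √(θ / lam₂)) ×ˢ
      (Set.univ.pi fun _ => Set.Icc (-α) α) ×ˢ (Set.univ.pi fun _ => Set.Icc (-α) α) ×ˢ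
      (Set.univ.pi fun _ => Set.univ.pi fun _ => Set.Icc 0 (θ / lam₁))
  have hbox : IsCompact box :=
    (isCompact_univ_pi fun _ => isCompact_univ_pi fun _ => isCompact_Icc).prod <|
      (isCompact_univ_pi fun _ => isCompact_Icc).prod <|
      (isCompact_univ_pi fun _ => isCompact_Icc).prod <|
      isCompact_univ_pi fun _ => isCompact_univ_pi fun _ => isCompact_Icc
  refine hbox.of_isClosed_subset
    ((isClosed_Omega2.inter isClosed_Omega3).inter (isClosed_le continuous_Ov continuous_const))
    fun z ⟨⟨hz₂, hz₃⟩, hO⟩ => ?_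
  have hz : z ∈ OmegaLev lam₁ lam₂ β θ X := ⟨hz₂, hO⟩
  exact ⟨fun i _ j _ => abs_le.1 (abs_W_le_of_mem_OmegaLev hl₁.le hl₂ hβ hz i j),
    fun i _ => abs_le.1 (hz₃.1 i), fun j _ => abs_le.1 (hz₃.2 j),
    fun i _ n _ => ⟨v_nonneg_of_mem_Omega2 hz₂ i n, v_le_of_mem_OmegaLev hl₁ hl₂.le hβ hz i n⟩⟩

theorem Ov_zero : Ov lam₁ lam₂ β X (0 : Pt N N₀ N₁) = (1 / (N : ℝ)) * ∑ j, ∑ n, X j n ^ 2 := by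
  simp [Ov, Fv, Rv, Pv, relu, outPre, preact, Finset.sum_comm (γ := Fin N)]

theorem zero_mem_Zset (hα : 0 ≤ alphaC N N₀ N₁ lam₁ lam₂ θ X) :
    (0 : Pt N N₀ N₁) ∈ Zset lam₁ lam₂ θ X :=
  ⟨fun i n => by simp [preact, relu], fun _ => by simpa using hα, fun _ => by simpa using hα⟩

theorem stmt4 (N N₀ N₁ : ℕ) (hN : 0 < N) (hN₀ : 0 < N₀) (hN₁ : 0 < N₁)
    (lam₁ lam₂ β θ : ℝ) (hlam₁ : 0 < lam₁) (hlam₂ : 0 < lam₂) (hbeta : 0 < β)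
    (X : Matrix (Fin N₀) (Fin N) ℝ)
    (hθ : (1 / (N : ℝ)) * ∑ j, ∑ n, (X j n) ^ 2 < θ) :
    (∃ z : Pt N N₀ N₁, z ∈ Zset lam₁ lam₂ θ X ∧
       ∀ w : Pt N N₀ N₁, w ∈ Zset lam₁ lam₂ θ X → Ov lam₁ lam₂ β X z ≤ Ov lam₁ lam₂ β X w) ∧
    (∃ M : ℝ, ∀ z : Pt N N₀ N₁, z ∈ Zset lam₁ lam₂ θ X →
       (∀ w : Pt N N₀ N₁, w ∈ Zset lam₁ lam₂ θ X → Ov lam₁ lam₂ β X z ≤ Ov lam₁ lam₂ β X w) →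
       normPt z ≤ M) ∧
    (∀ z : Pt N N₀ N₁, z ∈ Zset lam₁ lam₂ θ X →
       (∀ w : Pt N N₀ N₁, w ∈ Zset lam₁ lam₂ θ X → Ov lam₁ lam₂ β X z ≤ Ov lam₁ lam₂ β X w) →
       ∀ w : Pt N N₀ N₁, w ∈ Omega2 X → Ov lam₁ lam₂ β X z ≤ Ov lam₁ lam₂ β X w) := by
  have hθ₀ : 0 ≤ θ := (by positivity : (0 : ℝ) ≤ _).trans hθ.le
  have hO₀ : Ov lam₁ lam₂ β X (0 : Pt N N₀ N₁) ≤ θ := (Ov_zero (X := X)).trans_lt hθ |>.le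
  have h0Z : (0 : Pt N N₀ N₁) ∈ Zset lam₁ lam₂ θ X :=
    zero_mem_Zset (alphaC_nonneg hN₀ hN₁ hlam₁.le hlam₂.le hθ₀)
  have hK := isCompact_Zset_inter_sublevel (N₁ := N₁) (θ := θ) (X := X) hlam₁ hlam₂ hbeta.le
  obtain ⟨zs, hzs, hzs_min⟩ := hK.exists_isMinOn ⟨0, h0Z, hO₀⟩ continuous_Ov.continuousOn
  obtain ⟨M, hM⟩ := hK.bddAbove_image continuous_normPt.continuousOn
  refine ⟨⟨zs, hzs.1, isMinOn_iff.1 (isMinOn_of_isMinOn_inter_sublevel ⟨h0Z, hO₀⟩ hzs_min)⟩,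
    ⟨M, fun z hzZ hz => hM ⟨z, ⟨hzZ, (hz 0 h0Z).trans hO₀⟩, rfl⟩⟩, fun z _ hz => ?_⟩
  have hz_lev : IsMinOn (Ov lam₁ lam₂ β X) (Omega2 X ∩ {z | Ov lam₁ lam₂ β X z ≤ θ}) z := by
    intro w hw
    obtain ⟨w', hw'Z, hw'⟩ :=
      exists_mem_Zset_Ov_eq_of_mem_OmegaLev hN hN₀ hN₁ hlam₁ hlam₂ hbeta.le hw
    exact (hz w' hw'Z).trans hw'.le
  exact isMinOn_iff.1 (isMinOn_of_isMinOn_inter_sublevel ⟨h0Z.1, hO₀⟩ hz_lev)
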